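/- Consider the homogeneous firework process on ℕ. If E[N] < +∞ and E[R] < +∞, then P(V) = 0 and the quenched survival probability P(V | 𝒩 = n) equals 0 for μ-almost every environment n ∈ ℕ^ℕ. -/

import Mathlib

open MeasureTheory ProbabilityTheory Filter Set
open scoped ENNReal NNReal

noncomputable section

/-- The effective radius at vertex `i`: `0` if there are no stations at `i`, and the maximum
of the radii of the stations at `i` otherwise. -/
def effRadius (station : ℕ → ℕ) (r : ℕ → ℕ → ℝ) (i : ℕ) : ℝ :=
  if h : station i = 0 then 0
  else (Finset.range (station i)).sup'
    (by simpa [Finset.nonempty_range_iff] using h) (r i)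

/-- The set of activated vertices of the firework process on `ℕ`:
`0` is active iff there is at least one station at `0`, and `m+1` is active iff there is an
active vertex `i ≤ m` whose effective radius is at least `m+1-i`. -/
inductive FireworkActive (station : ℕ → ℕ) (r : ℕ → ℕ → ℝ) : ℕ → Prop
  | zero : 1 ≤ station 0 → FireworkActive station r 0
  | succ (i m : ℕ) : i ≤ m → FireworkActive station r i →
      ((m : ℝ) + 1 - (i : ℝ) ≤ effRadius station r i) → FireworkActive station r (m + 1)

/-- Survival of the firework process: infinitely many vertices are activated. -/
def fireworkSurvives (station : ℕ → ℕ) (r : ℕ → ℕ → ℝ) : Prop :=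
  {m : ℕ | FireworkActive station r m}.Infinite

/-- The probability generating function `G(t) = E[t^N]` of a law on `ℕ`. -/
def pgf (PN : Measure ℕ) (t : ℝ) : ℝ :=
  ∑' k : ℕ, (PN {k}).toReal * t ^ k

/-!
Call `n` a barrier when every site `i ≤ n` has effective radius `< n + 1 - i`: then no vertex
beyond `n` is ever activated. The effective radii are i.i.d. with
`P(R̃ < t) = E[P(R < t)^N] =: F(t)`, so `n` is a barrier with probability
`∏_{j = 1}^{n + 1} F(j)`. Bernoulli's inequality gives `1 - F(j) ≤ E[N] P(R ≥ j)`, and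
`∑_j P(R ≥ j) ≤ E[R]`, so the defects `1 - F(j)` are summable; as every `F(j) > 0` (because
`P(R < 1) > 0`), these probabilities are bounded below by some `c > 0`. Hence there are
infinitely many barriers with probability at least `c`. For large `n` the barrier condition only
involves the sites beyond any fixed `k`, so this is a tail event, of probability `1` by
Kolmogorov's zero-one law. The quenched statement follows by Fubini.
-/

namespace ENNReal

theorem one_sub_prod_le_sum_one_sub {ι : Type*} (s : Finset ι) {a : ι → ℝ≥0∞}
    (ha : ∀ i ∈ s, a i ≤ 1) : 1 - ∏ i ∈ s, a i ≤ ∑ i ∈ s, (1 - a i) := by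
  classical
  induction s using Finset.induction_on with
  | empty => simp
  | insert j s hj ih =>
    rw [Finset.prod_insert hj, Finset.sum_insert hj]
    have haj : a j ≤ 1 := ha j (Finset.mem_insert_self j s)
    calc 1 - a j * ∏ i ∈ s, a i
        ≤ (1 - a j) + (a j - a j * ∏ i ∈ s, a i) := tsub_le_tsub_add_tsub
      _ = (1 - a j) + a j * (1 - ∏ i ∈ s, a i) := by
          rw [ENNReal.mul_sub fun _ _ => ne_top_of_le_ne_top one_ne_top haj, mul_one]
      _ ≤ (1 - a j) + 1 * ∑ i ∈ s, (1 - a i) := by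
          gcongr
          exact ih fun i hi => ha i (Finset.mem_insert_of_mem hi)
      _ = (1 - a j) + ∑ i ∈ s, (1 - a i) := by rw [one_mul]

theorem exists_ne_zero_le_prod_range {b : ℕ → ℝ≥0∞} (hb0 : ∀ j, b j ≠ 0) (hb1 : ∀ j, b j ≤ 1)
    (hsum : ∑' j, (1 - b j) ≠ ∞) : ∃ c ≠ 0, ∀ n, c ≤ ∏ j ∈ Finset.range n, b j := by
  -- beyond some `K` the defects sum to less than `1`, which bounds the tail products below
  obtain ⟨K, hK⟩ := ((ENNReal.tendsto_sum_nat_add _ hsum).eventually_lt_const one_pos).exists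
  refine ⟨(∏ j ∈ Finset.range K, b j) * (1 - ∑' j, (1 - b (j + K))),
    mul_ne_zero (Finset.prod_ne_zero_iff.2 fun j _ => hb0 j) (tsub_pos_of_lt hK).ne', fun n => ?_⟩
  have htail : 1 - ∑' j, (1 - b (j + K)) ≤ ∏ j ∈ Finset.range n, b (K + j) := by
    refine tsub_le_iff_left.2 (tsub_le_iff_right.1 ?_)
    calc 1 - ∏ j ∈ Finset.range n, b (K + j)
        ≤ ∑ j ∈ Finset.range n, (1 - b (K + j)) :=
          one_sub_prod_le_sum_one_sub _ fun j _ => hb1 _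
      _ ≤ ∑' j, (1 - b (j + K)) := by
          simp_rw [add_comm K]
          exact ENNReal.sum_le_tsum _
  calc (∏ j ∈ Finset.range K, b j) * (1 - ∑' j, (1 - b (j + K)))
      ≤ ∏ j ∈ Finset.range (K + n), b j := by
        rw [Finset.prod_range_add]
        gcongr
    _ ≤ ∏ j ∈ Finset.range n, b j :=
        Finset.prod_le_prod_of_subset_of_le_one' (Finset.range_mono (Nat.le_add_left n K))
          fun j _ _ => hb1 j

theorem one_sub_pow_le {a : ℝ≥0∞} (ha : a ≤ 1) (k : ℕ) : 1 - a ^ k ≤ k * (1 - a) := by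
  simpa using one_sub_prod_le_sum_one_sub (Finset.range k) fun _ _ => ha

end ENNReal

section GeneratingFunction

variable {PN : Measure ℕ} {a : ℝ≥0∞}

theorem lintegral_pow_le_one [IsProbabilityMeasure PN] (ha : a ≤ 1) : ∫⁻ k, a ^ k ∂PN ≤ 1 :=
  (lintegral_mono fun k => pow_le_one' ha k).trans_eq (by simp)

theorem lintegral_pow_ne_zero [NeZero PN] (ha : a ≠ 0) : ∫⁻ k, a ^ k ∂PN ≠ 0 := by
  rw [Ne, lintegral_eq_zero_iff .of_discrete]
  intro h
  obtain ⟨k, hk⟩ := h.exists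
  exact pow_ne_zero k ha hk

theorem one_sub_lintegral_pow_le [IsProbabilityMeasure PN] (ha : a ≤ 1) :
    1 - ∫⁻ k, a ^ k ∂PN ≤ (∫⁻ k, (k : ℝ≥0∞) ∂PN) * (1 - a) := by
  rw [tsub_le_iff_right, ← lintegral_mul_const _ .of_discrete,
    ← lintegral_add_right _ .of_discrete]
  calc (1 : ℝ≥0∞) = ∫⁻ _, 1 ∂PN := by simp
    _ ≤ ∫⁻ k, (k : ℝ≥0∞) * (1 - a) + a ^ k ∂PN :=
        lintegral_mono fun k => tsub_le_iff_right.1 (ENNReal.one_sub_pow_le ha k)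

end GeneratingFunction

theorem le_measure_limsup_atTop {α : Type*} [MeasurableSpace α] {μ : Measure α}
    [IsFiniteMeasure μ] {s : ℕ → Set α} (hs : ∀ n, MeasurableSet (s n)) {c : ℝ≥0∞}
    (hc : ∀ n, c ≤ μ (s n)) : c ≤ μ (limsup s atTop) := by
  have hanti : Antitone fun n => ⋃ i ≥ n, s i :=
    fun m n hmn => biUnion_mono (fun i hi => le_trans hmn hi) fun _ _ => subset_rfl
  rw [limsup_eq_iInf_iSup_of_nat, iInf_eq_iInter]
  simp only [iSup_eq_iUnion]
  rw [hanti.measure_iInter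
    (fun n => (MeasurableSet.biUnion (to_countable _) fun i _ => hs i).nullMeasurableSet)
    ⟨0, measure_ne_top _ _⟩]
  exact le_iInf fun n =>
    (hc n).trans (measure_mono (subset_iUnion₂ (s := fun i (_ : i ≥ n) => s i) n le_rfl))

theorem tsum_indicator_Ici_natCast_add_one (x : ℝ) :
    ∑' j : ℕ, (Ici ((j : ℝ) + 1)).indicator (1 : ℝ → ℝ≥0∞) x = ⌊x⌋₊ := by
  have hj (j : ℕ) : (j : ℝ) + 1 ≤ x ↔ j < ⌊x⌋₊ := by
    rw [← Nat.add_one_le_iff, Nat.le_floor_iff' j.succ_ne_zero]; push_cast; rfl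
  simp only [indicator, mem_Ici, hj, Pi.one_apply]
  rw [tsum_eq_sum (s := Finset.range ⌊x⌋₊) (by simp), Finset.sum_boole,
    Finset.filter_true_of_mem fun j => Finset.mem_range.1, Finset.card_range]

theorem natCast_floor_le_ofReal (x : ℝ) : (⌊x⌋₊ : ℝ≥0∞) ≤ ENNReal.ofReal x := by
  rcases le_total 0 x with hx | hx
  · rw [← ENNReal.ofReal_natCast]
    exact ENNReal.ofReal_le_ofReal (Nat.floor_le hx)
  · simp [Nat.floor_of_nonpos hx]

theorem tsum_measure_Ici_le_lintegral_ofReal (PR : Measure ℝ) :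
    ∑' j : ℕ, PR (Ici ((j : ℝ) + 1)) ≤ ∫⁻ x, ENNReal.ofReal x ∂PR := by
  calc ∑' j : ℕ, PR (Ici ((j : ℝ) + 1))
      = ∫⁻ x, ∑' j : ℕ, (Ici ((j : ℝ) + 1)).indicator 1 x ∂PR := by
        rw [lintegral_tsum fun j => (measurable_one.indicator measurableSet_Ici).aemeasurable]
        simp_rw [lintegral_indicator_one measurableSet_Ici]
    _ ≤ ∫⁻ x, ENNReal.ofReal x ∂PR := by
        refine lintegral_mono fun x => ?_
        rw [tsum_indicator_Ici_natCast_add_one]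
        exact natCast_floor_le_ofReal x

theorem tsum_one_sub_lintegral_pow_ne_top {PN : Measure ℕ} {PR : Measure ℝ}
    [IsProbabilityMeasure PN] [IsProbabilityMeasure PR]
    (hEN : ∫⁻ k, (k : ℝ≥0∞) ∂PN < ⊤) (hER : ∫⁻ x, ENNReal.ofReal x ∂PR < ⊤) :
    ∑' j : ℕ, (1 - ∫⁻ k, PR (Iio ((j : ℝ) + 1)) ^ k ∂PN) ≠ ∞ := by
  refine (lt_of_le_of_lt ?_ (ENNReal.mul_lt_top hEN hER)).ne
  calc ∑' j : ℕ, (1 - ∫⁻ k, PR (Iio ((j : ℝ) + 1)) ^ k ∂PN)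
      ≤ ∑' j : ℕ, (∫⁻ k, (k : ℝ≥0∞) ∂PN) * PR (Ici ((j : ℝ) + 1)) := by
        refine ENNReal.tsum_le_tsum fun j => (one_sub_lintegral_pow_le prob_le_one).trans_eq ?_
        rw [← compl_Iio, prob_compl_eq_one_sub measurableSet_Iio]
    _ ≤ (∫⁻ k, (k : ℝ≥0∞) ∂PN) * ∫⁻ x, ENNReal.ofReal x ∂PR := by
        rw [ENNReal.tsum_mul_left]
        gcongr
        exact tsum_measure_Ici_le_lintegral_ofReal PR

theorem measure_setOf_forall_lt_of_iIndepFun {PR : Measure ℝ} {ν : Measure (ℕ → ℕ → ℝ)}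
    (hRlaw : ∀ p : ℕ × ℕ, ν.map (fun r => r p.1 p.2) = PR)
    (hRindep : iIndepFun (fun (p : ℕ × ℕ) (r : ℕ → ℕ → ℝ) => r p.1 p.2) ν)
    (S : Finset ℕ) (f : ℕ → ℕ) (t : ℕ → ℝ) :
    ν {r | ∀ i ∈ S, ∀ j < f i, r i j < t i} = ∏ i ∈ S, PR (Iio (t i)) ^ f i := by
  classical
  set Q := S.biUnion fun i => {i} ×ˢ Finset.range (f i)
  have hQ : {r : ℕ → ℕ → ℝ | ∀ i ∈ S, ∀ j < f i, r i j < t i}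
      = ⋂ q ∈ Q, (fun r => r q.1 q.2) ⁻¹' Iio (t q.1) := by
    ext r; simp [Q]
  have hlaw (q : ℕ × ℕ) : ν ((fun r => r q.1 q.2) ⁻¹' Iio (t q.1)) = PR (Iio (t q.1)) := by
    rw [← hRlaw q, Measure.map_apply (by fun_prop) measurableSet_Iio]
  rw [hQ, hRindep.measure_inter_preimage_eq_mul Q fun q _ => measurableSet_Iio]
  simp_rw [hlaw]
  rw [Finset.prod_biUnion]
  · simp
  · intro i _ i' _ hii'
    simp [Function.onFun, Finset.disjoint_left, hii'.symm]

theorem lintegral_prod_pow_eval {PN : Measure ℕ} {μ : Measure (ℕ → ℕ)}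
    (hNlaw : ∀ i : ℕ, μ.map (fun f => f i) = PN)
    (hNindep : iIndepFun (fun (i : ℕ) (f : ℕ → ℕ) => f i) μ)
    (S : Finset ℕ) (a : ℕ → ℝ≥0∞) :
    ∫⁻ f, ∏ i ∈ S, a i ^ f i ∂μ = ∏ i ∈ S, ∫⁻ k, a i ^ k ∂PN := by
  refine (lintegral_prod_eq_prod_lintegral_of_indepFun (μ := μ) S (fun i f => a i ^ f i)
    (hNindep.comp _ fun _ => .of_discrete)
    fun i => Measurable.of_discrete.comp (measurable_pi_apply i)).trans ?_
  refine Finset.prod_congr rfl fun i _ => ?_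
  rw [← hNlaw i, lintegral_map .of_discrete (measurable_pi_apply i)]

local notation "Ω" => (ℕ → ℕ) × (ℕ → ℕ → ℝ)

theorem effRadius_lt_iff {stn : ℕ → ℕ} {r : ℕ → ℕ → ℝ} {i : ℕ} {t : ℝ} (ht : 0 < t) :
    effRadius stn r i < t ↔ ∀ j < stn i, r i j < t := by
  unfold effRadius
  split_ifs with h
  · simp [h, ht]
  · simp [Finset.sup'_lt_iff]

def allRadiiLT (i : ℕ) (t : ℝ) : Set Ω := {p | ∀ j < p.1 i, p.2 i j < t}

def barrier (k n : ℕ) : Set Ω := ⋂ i ∈ Finset.Icc k n, allRadiiLT i (n + 1 - i)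

theorem measurableSet_allRadiiLT (i : ℕ) (t : ℝ) : MeasurableSet (allRadiiLT i t) := by
  unfold allRadiiLT; measurability

theorem measurableSet_barrier (k n : ℕ) : MeasurableSet (barrier k n) :=
  Finset.measurableSet_biInter _ fun i _ => measurableSet_allRadiiLT i _

theorem FireworkActive.le_of_mem_barrier {p : Ω} {n m : ℕ} (hp : p ∈ barrier 0 n)
    (hm : FireworkActive p.1 p.2 m) : m ≤ n := by
  induction hm with
  | zero => exact n.zero_le
  | succ i m _ _ hrad ih =>
    by_contra! hnm
    have hin : (i : ℝ) ≤ n := by exact_mod_cast ih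
    have hpos : (0 : ℝ) < n + 1 - i := by linarith
    have hblocked :=
      (effRadius_lt_iff hpos).2 (mem_iInter₂.1 hp i (Finset.mem_Icc.2 ⟨i.zero_le, ih⟩))
    have hmn : (n : ℝ) ≤ m := by exact_mod_cast Nat.lt_succ_iff.1 hnm
    linarith

theorem not_fireworkSurvives_of_mem_barrier {p : Ω} {n : ℕ} (hp : p ∈ barrier 0 n) :
    ¬ fireworkSurvives p.1 p.2 :=
  fun hsurv => hsurv ((finite_Iic n).subset fun _ hm => hm.le_of_mem_barrier hp)

theorem eventually_mem_allRadiiLT (p : Ω) (i : ℕ) :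
    ∀ᶠ n : ℕ in atTop, p ∈ allRadiiLT i (n + 1 - i) := by
  simp only [allRadiiLT, mem_ofPred_eq]
  refine (finite_Iio (p.1 i)).eventually_all.2 fun j _ => ?_
  filter_upwards [tendsto_natCast_atTop_atTop.eventually_gt_atTop (p.2 i j + i)] with n hn
  linarith

theorem limsup_barrier_zero (k : ℕ) : limsup (barrier 0) atTop = limsup (barrier k) atTop := by
  ext p
  simp only [mem_limsup_iff_frequently_mem]
  refine frequently_congr ?_
  filter_upwards [(finite_Iio k).eventually_all.2 fun i _ => eventually_mem_allRadiiLT p i]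
    with n hn
  simp only [barrier, mem_iInter₂, Finset.mem_Icc]
  exact ⟨fun h i hi => h i ⟨i.zero_le, hi.2⟩,
    fun h i hi => (lt_or_ge i k).elim (hn i) fun hki => h i ⟨hki, hi.2⟩⟩

abbrev siteSigma (i : ℕ) : MeasurableSpace Ω :=
  MeasurableSpace.generateFrom (range (allRadiiLT i))

theorem siteSigma_le (i : ℕ) : siteSigma i ≤ (inferInstance : MeasurableSpace Ω) :=
  MeasurableSpace.generateFrom_le (forall_mem_range.2 (measurableSet_allRadiiLT i))

theorem isPiSystem_range_allRadiiLT (i : ℕ) : IsPiSystem (range (allRadiiLT i)) := by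
  rintro _ ⟨a, rfl⟩ _ ⟨b, rfl⟩ -
  exact ⟨min a b, by ext p; simp [allRadiiLT, forall_and]⟩

theorem measurableSet_tail_limsup_barrier :
    MeasurableSet[limsup siteSigma atTop] (limsup (barrier 0) atTop) := by
  rw [limsup_eq_iInf_iSup_of_nat (u := siteSigma), MeasurableSpace.measurableSet_iInf]
  intro k
  rw [limsup_barrier_zero k]
  refine @MeasurableSet.measurableSet_limsup _ (⨆ i ≥ k, siteSigma i) _ fun n =>
    Finset.measurableSet_biInter _ fun i hi => ?_
  exact le_iSup₂ (f := fun i (_ : i ≥ k) => siteSigma i) i (Finset.mem_Icc.1 hi).1 _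
    (MeasurableSpace.measurableSet_generateFrom ⟨_, rfl⟩)

structure IsIIDEnvironment (PN : Measure ℕ) (PR : Measure ℝ) (μ : Measure (ℕ → ℕ))
    (ν : Measure (ℕ → ℕ → ℝ)) : Prop where
  station_law : ∀ i : ℕ, μ.map (fun f => f i) = PN
  station_indep : iIndepFun (fun (i : ℕ) (f : ℕ → ℕ) => f i) μ
  radius_law : ∀ p : ℕ × ℕ, ν.map (fun r => r p.1 p.2) = PR
  radius_indep : iIndepFun (fun (p : ℕ × ℕ) (r : ℕ → ℕ → ℝ) => r p.1 p.2) ν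

namespace IsIIDEnvironment

variable {PN : Measure ℕ} {PR : Measure ℝ} {μ : Measure (ℕ → ℕ)} {ν : Measure (ℕ → ℕ → ℝ)}
  [IsProbabilityMeasure ν]

theorem measure_biInter_allRadiiLT (h : IsIIDEnvironment PN PR μ ν) (S : Finset ℕ) (t : ℕ → ℝ) :
    (μ.prod ν) (⋂ i ∈ S, allRadiiLT i (t i)) = ∏ i ∈ S, ∫⁻ k, PR (Iio (t i)) ^ k ∂PN := by
  rw [Measure.prod_apply (S.measurableSet_biInter fun i _ => measurableSet_allRadiiLT i (t i))]
  have hsection (f : ℕ → ℕ) : ν (Prod.mk f ⁻¹' ⋂ i ∈ S, allRadiiLT i (t i))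
      = ∏ i ∈ S, PR (Iio (t i)) ^ f i := by
    rw [← measure_setOf_forall_lt_of_iIndepFun h.radius_law h.radius_indep S f t]
    congr 1; ext r; simp [allRadiiLT]
  simp_rw [hsection]
  exact lintegral_prod_pow_eval h.station_law h.station_indep S _

theorem measure_allRadiiLT (h : IsIIDEnvironment PN PR μ ν) (i : ℕ) (t : ℝ) :
    (μ.prod ν) (allRadiiLT i t) = ∫⁻ k, PR (Iio t) ^ k ∂PN := by
  simpa using h.measure_biInter_allRadiiLT {i} fun _ => t

theorem measure_barrier_zero (h : IsIIDEnvironment PN PR μ ν) (n : ℕ) :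
    (μ.prod ν) (barrier 0 n)
      = ∏ j ∈ Finset.range (n + 1), ∫⁻ k, PR (Iio ((j : ℝ) + 1)) ^ k ∂PN := by
  rw [barrier, ← Nat.range_succ_eq_Icc_zero, h.measure_biInter_allRadiiLT,
    ← Finset.prod_range_reflect]
  refine Finset.prod_congr rfl fun j hj => ?_
  rw [Nat.add_sub_cancel, Nat.cast_sub (Nat.lt_succ_iff.1 (Finset.mem_range.1 hj))]
  ring_nf

theorem iIndep_siteSigma (h : IsIIDEnvironment PN PR μ ν) : iIndep siteSigma (μ.prod ν) := by
  refine iIndepSets.iIndep siteSigma_le _ isPiSystem_range_allRadiiLT (fun _ => rfl) ?_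
  refine (iIndepSets_iff _ _).2 fun S f hf => ?_
  choose! t ht using hf
  calc (μ.prod ν) (⋂ i ∈ S, f i) = (μ.prod ν) (⋂ i ∈ S, allRadiiLT i (t i)) := by
        rw [iInter₂_congr fun i hi => (ht i hi).symm]
    _ = ∏ i ∈ S, (μ.prod ν) (f i) := by
        rw [h.measure_biInter_allRadiiLT]
        exact Finset.prod_congr rfl fun i hi => by rw [← ht i hi, h.measure_allRadiiLT]

theorem exists_ne_zero_le_measure_barrier (h : IsIIDEnvironment PN PR μ ν)
    [IsProbabilityMeasure PN] [IsProbabilityMeasure PR] (hR1 : 0 < PR (Iio 1))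
    (hEN : ∫⁻ k, (k : ℝ≥0∞) ∂PN < ⊤) (hER : ∫⁻ x, ENNReal.ofReal x ∂PR < ⊤) :
    ∃ c ≠ 0, ∀ n, c ≤ (μ.prod ν) (barrier 0 n) := by
  obtain ⟨c, hc0, hc⟩ := ENNReal.exists_ne_zero_le_prod_range
    (fun j => lintegral_pow_ne_zero (hR1.trans_le (measure_mono (Iio_subset_Iio (by simp)))).ne')
    (fun j => lintegral_pow_le_one prob_le_one) (tsum_one_sub_lintegral_pow_ne_top hEN hER)
  exact ⟨c, hc0, fun n => (hc (n + 1)).trans_eq (h.measure_barrier_zero n).symm⟩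

theorem measure_limsup_barrier (h : IsIIDEnvironment PN PR μ ν) [IsProbabilityMeasure μ]
    [IsProbabilityMeasure PN] [IsProbabilityMeasure PR] (hR1 : 0 < PR (Iio 1))
    (hEN : ∫⁻ k, (k : ℝ≥0∞) ∂PN < ⊤) (hER : ∫⁻ x, ENNReal.ofReal x ∂PR < ⊤) :
    (μ.prod ν) (limsup (barrier 0) atTop) = 1 := by
  obtain ⟨c, hc0, hc⟩ := h.exists_ne_zero_le_measure_barrier hR1 hEN hER
  refine (measure_zero_or_one_of_measurableSet_limsup_atTop siteSigma_le h.iIndep_siteSigma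
    measurableSet_tail_limsup_barrier).resolve_left fun h0 => hc0 ?_
  simpa [h0] using le_measure_limsup_atTop (measurableSet_barrier 0) hc

end IsIIDEnvironment

theorem firework_extinction_of_finite_expectations_general
    (PN : Measure ℕ) (PR : Measure ℝ)
    [IsProbabilityMeasure PN] [IsProbabilityMeasure PR]
    (μ : Measure (ℕ → ℕ)) (ν : Measure (ℕ → ℕ → ℝ))
    [IsProbabilityMeasure μ] [IsProbabilityMeasure ν]
    -- the station numbers are i.i.d. with law `PN`
    (hNlaw : ∀ i : ℕ, μ.map (fun f => f i) = PN)
    (hNindep : iIndepFun (fun (i : ℕ) (f : ℕ → ℕ) => f i) μ)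
    -- the radii are i.i.d. with law `PR`
    (hRlaw : ∀ p : ℕ × ℕ, ν.map (fun r => r p.1 p.2) = PR)
    (hRindep : iIndepFun
      (fun (p : ℕ × ℕ) (r : ℕ → ℕ → ℝ) => r p.1 p.2) ν)
    -- the radii take values in `[0, ∞)` and `P(R < 1) ∈ (0,1)`
    (hR1 : 0 < PR (Set.Iio (1 : ℝ)) ∧ PR (Set.Iio (1 : ℝ)) < 1)
    -- `E[N] < +∞` and `E[R] < +∞`
    (hEN : ∫⁻ k, (k : ℝ≥0∞) ∂PN < ⊤)
    (hER : ∫⁻ x, ENNReal.ofReal x ∂PR < ⊤) :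
    (μ.prod ν) {p : (ℕ → ℕ) × (ℕ → ℕ → ℝ) | fireworkSurvives p.1 p.2} = 0 ∧
    ∀ᵐ stn ∂μ, ν {r | fireworkSurvives stn r} = 0 := by
  have hblocked := (IsIIDEnvironment.mk hNlaw hNindep hRlaw hRindep).measure_limsup_barrier
    hR1.1 hEN hER
  have hsurvives : {p : (ℕ → ℕ) × (ℕ → ℕ → ℝ) | fireworkSurvives p.1 p.2}
      ⊆ (limsup (barrier 0) atTop)ᶜ := fun p hp hpT =>
    let ⟨_, hn⟩ := (mem_limsup_iff_frequently_mem.1 hpT).exists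
    not_fireworkSurvives_of_mem_barrier hn hp
  have hV := measure_mono_null hsurvives <|
    (prob_compl_eq_zero_iff (MeasurableSet.measurableSet_limsup (measurableSet_barrier 0))).2
      hblocked
  exact ⟨hV, (Measure.ae_ae_of_ae_prod (measure_eq_zero_iff_ae_notMem.1 hV)).mono
    fun _ => measure_eq_zero_iff_ae_notMem.2⟩

/-- **Proposition 3(4)**: for the homogeneous firework process on `ℕ`, if
`E[N] < +∞` and `E[R] < +∞` then `P(V) = 0` and the quenched survival probability
is `0` for `μ`-almost every environment. -/
theorem firework_extinction_of_finite_expectations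
    (PN : Measure ℕ) (PR : Measure ℝ)
    [IsProbabilityMeasure PN] [IsProbabilityMeasure PR]
    (μ : Measure (ℕ → ℕ)) (ν : Measure (ℕ → ℕ → ℝ))
    [IsProbabilityMeasure μ] [IsProbabilityMeasure ν]
    -- the station numbers are i.i.d. with law `PN`
    (hNlaw : ∀ i : ℕ, μ.map (fun f => f i) = PN)
    (hNindep : iIndepFun (fun (i : ℕ) (f : ℕ → ℕ) => f i) μ)
    -- the radii are i.i.d. with law `PR`
    (hRlaw : ∀ p : ℕ × ℕ, ν.map (fun r => r p.1 p.2) = PR)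
    (hRindep : iIndepFun
      (fun (p : ℕ × ℕ) (r : ℕ → ℕ → ℝ) => r p.1 p.2) ν)
    -- the radii take values in `[0, ∞)` and `P(R < 1) ∈ (0,1)`
    (hRnonneg : PR (Set.Iio (0 : ℝ)) = 0)
    (hR1 : 0 < PR (Set.Iio (1 : ℝ)) ∧ PR (Set.Iio (1 : ℝ)) < 1)
    -- `E[N] < +∞` and `E[R] < +∞`
    (hEN : ∫⁻ k, (k : ℝ≥0∞) ∂PN < ⊤)
    (hER : ∫⁻ x, ENNReal.ofReal x ∂PR < ⊤) :
    (μ.prod ν) {p : (ℕ → ℕ) × (ℕ → ℕ → ℝ) | fireworkSurvives p.1 p.2} = 0 ∧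
    ∀ᵐ stn ∂μ, ν {r | fireworkSurvives stn r} = 0 :=
  firework_extinction_of_finite_expectations_general PN PR μ ν hNlaw hNindep hRlaw hRindep hR1 hEN
    hER

end
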